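/- The unique solution of the second-order linear ODE E''(z) = E(z)/(1-z)² + 1/(1-z)² with E(0) = 0 and E'(0) = 1, on a neighborhood of 0 in (−1,1), is E(z) = ((3+√5)/(2√5)) (1-z)^{−(√5−1)/2} − ((3−√5)/(2√5)) (1-z)^{(1+√5)/2} − 1. -/

import Mathlib

open Real Filter Topology Set

/-- The explicit solution of the Eulerian ODE for the expected path length. -/
noncomputable def E9 (z : ℝ) : ℝ :=
  (3 + Real.sqrt 5) / (2 * Real.sqrt 5) * (1 - z) ^ (-((Real.sqrt 5 - 1) / 2)) -
    (3 - Real.sqrt 5) / (2 * Real.sqrt 5) * (1 - z) ^ ((1 + Real.sqrt 5) / 2) - 1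

noncomputable def E9d (z : ℝ) : ℝ :=
  (3 + Real.sqrt 5) / (2 * Real.sqrt 5) * ((Real.sqrt 5 - 1) / 2) *
      ((1 - z) ^ (-((Real.sqrt 5 - 1) / 2)) / (1 - z))
    + (3 - Real.sqrt 5) / (2 * Real.sqrt 5) * ((1 + Real.sqrt 5) / 2) *
      ((1 - z) ^ ((1 + Real.sqrt 5) / 2) / (1 - z))

lemma s5_pos : (0:ℝ) < Real.sqrt 5 := Real.sqrt_pos.mpr (by norm_num)
lemma s5_sq : Real.sqrt 5 ^ 2 = 5 := Real.sq_sqrt (by norm_num)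

lemma hE9deriv : ∀ z ∈ Ioo (-1:ℝ) 1, HasDerivAt E9 (E9d z) z := by
  intro z hz
  have hu : (0:ℝ) < 1 - z := by linarith [hz.2]
  have h1 : HasDerivAt (fun z : ℝ => 1 - z) (-1) z := by
    simpa using (hasDerivAt_id z).const_sub 1
  have h2 := h1.rpow_const (p := -((Real.sqrt 5 - 1) / 2)) (Or.inl hu.ne')
  have h3 := h1.rpow_const (p := (1 + Real.sqrt 5) / 2) (Or.inl hu.ne')
  have h := (((h2.const_mul ((3 + Real.sqrt 5) / (2 * Real.sqrt 5))).sub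
      (h3.const_mul ((3 - Real.sqrt 5) / (2 * Real.sqrt 5)))).sub_const 1)
  refine h.congr_deriv (Eq.symm ?_)
  rw [Real.rpow_sub_one hu.ne', Real.rpow_sub_one hu.ne']
  unfold E9d
  ring

lemma hE9dderiv : ∀ z ∈ Ioo (-1:ℝ) 1,
    HasDerivAt E9d (E9 z / (1 - z) ^ 2 + 1 / (1 - z) ^ 2) z := by
  intro z hz
  have hu : (0:ℝ) < 1 - z := by linarith [hz.2]
  have h1 : HasDerivAt (fun z : ℝ => 1 - z) (-1) z := by
    simpa using (hasDerivAt_id z).const_sub 1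
  have h2 := h1.rpow_const (p := -((Real.sqrt 5 - 1) / 2)) (Or.inl hu.ne')
  have h3 := h1.rpow_const (p := (1 + Real.sqrt 5) / 2) (Or.inl hu.ne')
  have h := ((h2.div h1 hu.ne').const_mul
        ((3 + Real.sqrt 5) / (2 * Real.sqrt 5) * ((Real.sqrt 5 - 1) / 2))).add
      ((h3.div h1 hu.ne').const_mul
        ((3 - Real.sqrt 5) / (2 * Real.sqrt 5) * ((1 + Real.sqrt 5) / 2)))
  refine h.congr_deriv (Eq.symm ?_)
  rw [Real.rpow_sub_one hu.ne', Real.rpow_sub_one hu.ne']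
  unfold E9
  have hs := s5_sq
  have hs0 := s5_pos
  set s := Real.sqrt 5
  set A := (1 - z) ^ (-((s - 1) / 2))
  set B := (1 - z) ^ ((1 + s) / 2)
  field_simp
  linear_combination ((3-s)*B-(3+s)*A) * hs

lemma E9_zero : E9 0 = 0 := by
  have hs0 := s5_pos
  simp only [E9, sub_zero, Real.one_rpow]
  field_simp
  ring

lemma E9d_zero : E9d 0 = 1 := by
  have hs0 := s5_pos
  simp only [E9d, sub_zero, Real.one_rpow]
  field_simp
  ring

/-- The unique solution of `E'' = E/(1-z)² + 1/(1-z)²`, `E(0)=0`, `E'(0)=1`, near `0` is `E9`. -/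
theorem stmt9 :
    E9 0 = 0 ∧
    (∃ E' : ℝ → ℝ, E' 0 = 1 ∧ ∀ z ∈ Ioo (-1 : ℝ) 1,
      HasDerivAt E9 (E' z) z ∧
        HasDerivAt E' (E9 z / (1 - z) ^ 2 + 1 / (1 - z) ^ 2) z) ∧
    ∀ (f f' : ℝ → ℝ) (δ : ℝ), 0 < δ → δ ≤ 1 →
      (∀ z ∈ Ioo (-δ) δ,
        HasDerivAt f (f' z) z ∧
          HasDerivAt f' (f z / (1 - z) ^ 2 + 1 / (1 - z) ^ 2) z) →
      f 0 = 0 → f' 0 = 1 →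
      ∀ z ∈ Ioo (-δ) δ, f z = E9 z := by
  refine ⟨E9_zero, ⟨E9d, E9d_zero, fun z hz => ⟨hE9deriv z hz, hE9dderiv z hz⟩⟩, ?_⟩
  intro f f' δ hδ hδ1 hode hf0 hf'0 z hz
  have hzδ : |z| < δ := abs_lt.mpr ⟨hz.1, hz.2⟩
  set r : ℝ := (|z| + δ) / 2 with hr_def
  have hzr : |z| < r := by simp only [hr_def]; linarith
  have hrδ : r < δ := by simp only [hr_def]; linarith
  have hr0 : 0 < r := lt_of_le_of_lt (abs_nonneg z) hzr
  have hr1 : r < 1 := lt_of_lt_of_le hrδ hδ1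
  set w : ℝ → ℝ := fun t => 1 / (1 - max (-r) (min r t)) ^ 2 with hw_def
  have hwb : ∀ t, 0 ≤ w t ∧ w t ≤ 1 / (1 - r) ^ 2 := by
    intro t
    have hc : max (-r) (min r t) ≤ r := max_le (by linarith) (min_le_left _ _)
    have h1 : (0:ℝ) < 1 - r := by linarith
    have h2 : (1 - r) ^ 2 ≤ (1 - max (-r) (min r t)) ^ 2 := by
      apply pow_le_pow_left₀ h1.le (by linarith)
    constructor
    · positivity
    · exact one_div_le_one_div_of_le (by positivity) h2
  set v : ℝ → ℝ × ℝ → ℝ × ℝ := fun t p => (p.2, w t * p.1 + w t) with hv_def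
  set K : NNReal := ⟨max 1 (1 / (1 - r) ^ 2), le_max_of_le_left zero_le_one⟩ with hK_def
  have hKc : (K : ℝ) = max 1 (1 / (1 - r) ^ 2) := rfl
  have hv : ∀ t, LipschitzWith K (v t) := by
    intro t
    apply LipschitzWith.of_dist_le_mul
    intro p q
    rw [Prod.dist_eq, Prod.dist_eq]
    simp only [hv_def]
    have h2 : dist (w t * p.1 + w t) (w t * q.1 + w t) = w t * dist p.1 q.1 := by
      have he : w t * p.1 + w t - (w t * q.1 + w t) = w t * (p.1 - q.1) := by ring
      rw [Real.dist_eq, Real.dist_eq, he, abs_mul, abs_of_nonneg (hwb t).1]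
    rw [h2]
    have hd1 : dist p.1 q.1 ≤ max (dist p.1 q.1) (dist p.2 q.2) := le_max_left _ _
    have hd2 : dist p.2 q.2 ≤ max (dist p.1 q.1) (dist p.2 q.2) := le_max_right _ _
    have hdn : 0 ≤ max (dist p.1 q.1) (dist p.2 q.2) :=
      le_trans dist_nonneg hd1
    apply max_le
    · calc dist p.2 q.2 ≤ 1 * max (dist p.1 q.1) (dist p.2 q.2) := by linarith
        _ ≤ (K : ℝ) * _ := by
            apply mul_le_mul_of_nonneg_right (by rw [hKc]; exact le_max_left _ _) hdn
    · calc w t * dist p.1 q.1 ≤ (1 / (1 - r) ^ 2) * max (dist p.1 q.1) (dist p.2 q.2) := by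
            apply mul_le_mul (hwb t).2 hd1 dist_nonneg
            positivity
        _ ≤ (K : ℝ) * _ := by
            apply mul_le_mul_of_nonneg_right (by rw [hKc]; exact le_max_right _ _) hdn
  have hw' : ∀ t ∈ Ioo (-r) r, w t = 1 / (1 - t) ^ 2 := by
    intro t ht
    simp only [hw_def]
    rw [min_eq_right ht.2.le, max_eq_right ht.1.le]
  have hsub : Ioo (-r) r ⊆ Ioo (-δ) δ := Ioo_subset_Ioo (by linarith) hrδ.le
  have hsub1 : Ioo (-r) r ⊆ Ioo (-1 : ℝ) 1 := Ioo_subset_Ioo (by linarith) hr1.le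
  have hF : ∀ t ∈ Ioo (-r) r,
      HasDerivAt (fun t => (f t, f' t)) (v t (f t, f' t)) t ∧ (f t, f' t) ∈ univ := by
    intro t ht
    obtain ⟨hd1, hd2⟩ := hode t (hsub ht)
    refine ⟨HasDerivAt.prodMk hd1 ?_, mem_univ _⟩
    have : f t / (1 - t) ^ 2 + 1 / (1 - t) ^ 2 = w t * f t + w t := by
      rw [hw' t ht]; ring
    rw [← this]; exact hd2
  have hG : ∀ t ∈ Ioo (-r) r,
      HasDerivAt (fun t => (E9 t, E9d t)) (v t (E9 t, E9d t)) t ∧ (E9 t, E9d t) ∈ univ := by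
    intro t ht
    refine ⟨HasDerivAt.prodMk (hE9deriv t (hsub1 ht)) ?_, mem_univ _⟩
    have : E9 t / (1 - t) ^ 2 + 1 / (1 - t) ^ 2 = w t * E9 t + w t := by
      rw [hw' t ht]; ring
    rw [← this]; exact hE9dderiv t (hsub1 ht)
  have heq : (fun t => (f t, f' t)) 0 = (fun t => (E9 t, E9d t)) 0 := by
    simp only [hf0, hf'0, E9_zero, E9d_zero]
  have := ODE_solution_unique_of_mem_Ioo (v := v) (s := fun _ => univ) (K := K)
    (fun t _ => (hv t).lipschitzOnWith) (t₀ := 0) ⟨neg_neg_iff_pos.mpr hr0, hr0⟩ hF hG heq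
  have hzmem : z ∈ Ioo (-r) r := abs_lt.mp hzr |>.imp id id |> fun h => ⟨h.1, h.2⟩
  exact congrArg Prod.fst (this hzmem)
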